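/- (Upper bound on exergy from the Jarzynski-like equality, Section III.B) Let ρ_in = Σ_{i=1}^r p_i |p_i⟩⟨p_i| be an input state, Φ a quantum channel, ρ_out = Φ(ρ_in), β > 0, and H an arbitrary Hermitian observable with ΔE_s = Tr[ρ_out H] − Tr[ρ_in H] the internal energy change and ΔS = S(ρ_out) − S(ρ_in) the information production. Then the exergy Δℰ = ΔE_s − β^{−1} ΔS satisfies Δℰ ≤ ΔE_s + β^{−1} ln( Σ_{i=1}^r e^{−C(Φ(|p_i⟩⟨p_i|), ρ_out)} ). -/

import Mathlib

open scoped Kronecker BigOperators ComplexOrder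

namespace QCE

variable {ι : Type*} [Fintype ι] [DecidableEq ι]

/-- Apply a real function to a matrix via the spectral decomposition (functional calculus on
the eigenvalues); returns `0` if the matrix is not Hermitian. -/
noncomputable def matFun (A : Matrix ι ι ℂ) (f : ℝ → ℝ) : Matrix ι ι ℂ :=
  if h : A.IsHermitian then h.cfc f else 0

/-- Matrix logarithm taken on the support (eigenvalue `0` is sent to `0`,
since `Real.log 0 = 0`). -/
noncomputable def matLog (A : Matrix ι ι ℂ) : Matrix ι ι ℂ :=
  matFun A Real.log

/-- Quantum cross entropy `C(ρ₁, ρ₂) = -Tr[ρ₁ ln ρ₂]`, with the logarithm on the support. -/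
noncomputable def crossEnt (ρ₁ ρ₂ : Matrix ι ι ℂ) : ℝ :=
  -((ρ₁ * matLog ρ₂).trace.re)

/-- Von Neumann entropy `S(ρ) = -Tr[ρ ln ρ]`. -/
noncomputable def vnEntropy (ρ : Matrix ι ι ℂ) : ℝ :=
  crossEnt ρ ρ

/-- A density matrix: positive semidefinite with unit trace. -/
def IsDensityMatrix (ρ : Matrix ι ι ℂ) : Prop :=
  ρ.PosSemidef ∧ ρ.trace = 1

/-- The rank-one projector `|v⟩⟨v|`. -/
noncomputable def outer (v : ι → ℂ) : Matrix ι ι ℂ :=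
  Matrix.vecMulVec v (star v)

/-- An orthonormal family of vectors. -/
def OrthonormalFam {r : ℕ} (v : Fin r → ι → ℂ) : Prop :=
  ∀ i j, (∑ a, star (v i a) * v j a) = if i = j then (1 : ℂ) else 0

/-- The Choi matrix of a linear map on matrices. -/
noncomputable def choi {κ : Type*} [Fintype κ] [DecidableEq κ]
    (Φ : Matrix ι ι ℂ →ₗ[ℂ] Matrix κ κ ℂ) : Matrix (ι × κ) (ι × κ) ℂ :=
  ∑ i : ι, ∑ j : ι, (Matrix.single i j (1 : ℂ)) ⊗ₖ (Φ (Matrix.single i j 1))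

/-- A quantum channel: completely positive (positive semidefinite Choi matrix, by Choi's
theorem) and trace preserving. -/
def IsCPTP {κ : Type*} [Fintype κ] [DecidableEq κ]
    (Φ : Matrix ι ι ℂ →ₗ[ℂ] Matrix κ κ ℂ) : Prop :=
  (choi Φ).PosSemidef ∧ ∀ ρ : Matrix ι ι ℂ, (Φ ρ).trace = ρ.trace

/-- Partial trace over the second tensor factor. -/
noncomputable def ptraceB {dA dB : ℕ}
    (ρ : Matrix (Fin dA × Fin dB) (Fin dA × Fin dB) ℂ) : Matrix (Fin dA) (Fin dA) ℂ :=
  Matrix.of fun i j => ∑ k : Fin dB, ρ (i, k) (j, k)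

/-- Partial trace over the first tensor factor. -/
noncomputable def ptraceA {dA dB : ℕ}
    (ρ : Matrix (Fin dA × Fin dB) (Fin dA × Fin dB) ℂ) : Matrix (Fin dB) (Fin dB) ℂ :=
  Matrix.of fun i j => ∑ k : Fin dA, ρ (k, i) (k, j)


/-- Matrix square root via the spectral decomposition. -/
noncomputable def matSqrt (A : Matrix ι ι ℂ) : Matrix ι ι ℂ :=
  matFun A Real.sqrt

/-- Quantum fidelity `F[ρ,σ] = (Tr[√(√ρ σ √ρ)])²`. -/
noncomputable def fidelity (ρ σ : Matrix ι ι ℂ) : ℝ :=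
  ((matSqrt (matSqrt ρ * σ * matSqrt ρ)).trace.re) ^ 2

/-!
The input state is diagonal in the orthonormal family `vᵢ`, so `ln ρin = ∑ ln pᵢ |vᵢ⟩⟨vᵢ|`
and `S(ρin) = -∑ pᵢ ln pᵢ`. By linearity of `Φ` and of the cross entropy in its first argument,
`S(ρout) = C(ρout, ρout) = ∑ pᵢ Cᵢ` with `Cᵢ = C(Φ(|vᵢ⟩⟨vᵢ|), ρout)`. Hence
`S(ρin) - S(ρout) = ∑ pᵢ (-Cᵢ - ln pᵢ) ≤ ln ∑ e^{-Cᵢ}` by concavity of `ln` (Gibbs' inequality),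
which is the claim after multiplying by `β⁻¹ > 0`.
-/

theorem sum_mul_sub_log_le_log_sum_exp {κ : Type*} [Fintype κ] {p : κ → ℝ}
    (hp : ∀ i, 0 < p i) (hp1 : ∑ i, p i = 1) (x : κ → ℝ) :
    ∑ i, p i * (x i - Real.log (p i)) ≤ Real.log (∑ i, Real.exp (x i)) := by
  have jensen := strictConcaveOn_log_Ioi.concaveOn.le_map_sum (t := Finset.univ) (w := p)
    (p := fun i => Real.exp (x i) / p i) (fun i _ => (hp i).le) hp1
    (fun i _ => div_pos (Real.exp_pos _) (hp i))
  have hlog (i : κ) : Real.log (Real.exp (x i) / p i) = x i - Real.log (p i) := by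
    rw [Real.log_div (Real.exp_ne_zero _) (hp i).ne', Real.log_exp]
  have hmean (i : κ) : p i * (Real.exp (x i) / p i) = Real.exp (x i) :=
    mul_div_cancel₀ _ (hp i).ne'
  simpa only [smul_eq_mul, hlog, hmean] using jensen

section OrthogonalIdempotents

open Polynomial

variable {A : Type*} [Ring A] [Algebra ℝ A] {κ : Type*} [Fintype κ] [DecidableEq κ]
  {P : κ → A}

theorem sum_smul_mul_sum_smul (hP : ∀ i j, P i * P j = if i = j then P i else 0)
    (c d : κ → ℝ) :
    (∑ i, c i • P i) * (∑ j, d j • P j) = ∑ i, (c i * d i) • P i := by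
  simp only [Finset.sum_mul, Finset.mul_sum, smul_mul_smul_comm, hP, smul_ite, smul_zero,
    Finset.sum_ite_eq', Finset.mem_univ, if_true]

theorem sum_smul_pow_succ (hP : ∀ i j, P i * P j = if i = j then P i else 0)
    (c : κ → ℝ) (k : ℕ) :
    (∑ i, c i • P i) ^ (k + 1) = ∑ i, c i ^ (k + 1) • P i := by
  induction k with
  | zero => simp
  | succ k ih => simp only [pow_succ _ (k + 1), ih, sum_smul_mul_sum_smul hP]

theorem aeval_sum_smul (hP : ∀ i j, P i * P j = if i = j then P i else 0)
    (c : κ → ℝ) (q : ℝ[X]) :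
    aeval (∑ i, c i • P i) q = q.eval 0 • (1 - ∑ i, P i) + ∑ i, q.eval (c i) • P i := by
  induction q using Polynomial.induction_on' with
  | add f g hf hg =>
    simp only [map_add, hf, hg, eval_add, add_smul, Finset.sum_add_distrib]
    abel
  | monomial k a =>
    cases k with
    | zero => simp [Algebra.algebraMap_eq_smul_one, smul_sub, Finset.smul_sum]
    | succ k =>
      rw [aeval_monomial, ← Algebra.smul_def, sum_smul_pow_succ hP, Finset.smul_sum]
      simp [smul_smul]

theorem spectrum_sum_smul_subset (hP : ∀ i j, P i * P j = if i = j then P i else 0)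
    (c : κ → ℝ) : spectrum ℝ (∑ i, c i • P i) ⊆ insert 0 (Set.range c) := by
  intro x hx
  have : Nontrivial A := (subsingleton_or_nontrivial A).resolve_left fun _ => by
    simp [spectrum.of_subsingleton] at hx
  let q : ℝ[X] := X * ∏ i, (X - C (c i))
  have hq : aeval (∑ i, c i • P i) q = 0 := by
    simp only [q, aeval_sum_smul hP, eval_mul, eval_X, eval_prod, eval_sub, eval_C, zero_mul,
      zero_smul, zero_add]
    exact Finset.sum_eq_zero fun i _ => by
      rw [Finset.prod_eq_zero (Finset.mem_univ i) (sub_self _), mul_zero, zero_smul]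
  have hqx : q.eval x ∈ spectrum ℝ (0 : A) :=
    hq ▸ spectrum.subset_polynomial_aeval _ q ⟨x, hx, rfl⟩
  rw [spectrum.zero_eq, Set.mem_singleton_iff] at hqx
  simp only [q, eval_mul, eval_X, eval_prod, eval_sub, eval_C] at hqx
  rcases mul_eq_zero.1 hqx with hx0 | hprod
  · exact Or.inl hx0
  · obtain ⟨i, -, hi⟩ := Finset.prod_eq_zero_iff.1 hprod
    exact Or.inr ⟨i, (sub_eq_zero.1 hi).symm⟩

theorem cfc_sum_smul [StarRing A] [StarModule ℝ A] [TopologicalSpace A]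
    [ContinuousFunctionalCalculus ℝ A IsSelfAdjoint]
    (hP : ∀ i j, P i * P j = if i = j then P i else 0) (hP_sa : ∀ i, IsSelfAdjoint (P i))
    (c : κ → ℝ) (f : ℝ → ℝ) :
    cfc f (∑ i, c i • P i) = f 0 • (1 - ∑ i, P i) + ∑ i, f (c i) • P i := by
  -- on the spectrum, `f` agrees with its Lagrange interpolant at `0` and the `cᵢ`
  let s : Finset ℝ := insert 0 (Finset.univ.image c)
  let q := Lagrange.interpolate s id f
  have hq {x : ℝ} (hx : x ∈ s) : q.eval x = f x :=
    Lagrange.eval_interpolate_at_node f Function.injective_id.injOn hx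
  have hsa : IsSelfAdjoint (∑ i, c i • P i) :=
    isSelfAdjoint_sum _ fun i _ => (IsSelfAdjoint.all (c i)).smul (hP_sa i)
  have hfq : (spectrum ℝ (∑ i, c i • P i)).EqOn f q.eval := fun x hx => by
    refine (hq ?_).symm
    simpa [s] using spectrum_sum_smul_subset hP c hx
  rw [cfc_congr hfq, cfc_polynomial q _ hsa, aeval_sum_smul hP, hq (by simp [s])]
  simp [s, hq]

end OrthogonalIdempotents

section Outer

variable {r : ℕ}

theorem outer_mul_outer {m : Type*} [Fintype m] {v : Fin r → m → ℂ} (hv : OrthonormalFam v)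
    (i j : Fin r) :
    outer (v i) * outer (v j) = if i = j then outer (v i) else 0 := by
  ext a b
  have hsum : ∑ c, v i a * star (v i c) * (v j c * star (v j b))
      = v i a * star (v j b) * ∑ c, star (v i c) * v j c := by
    rw [Finset.mul_sum]
    exact Finset.sum_congr rfl fun c _ => by ring
  simp only [Matrix.mul_apply, outer, Matrix.vecMulVec_apply, Pi.star_apply, hsum, hv i j]
  split_ifs with hij
  · subst hij
    simp [Matrix.vecMulVec_apply]
  · simp

theorem trace_outer {m : Type*} [Fintype m] {v : Fin r → m → ℂ} (hv : OrthonormalFam v)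
    (i : Fin r) : (outer (v i)).trace = 1 := by
  simpa [Matrix.trace, outer, Matrix.vecMulVec_apply, mul_comm] using hv i i

theorem crossEnt_sum_smul_left {κ : Type*} [Fintype κ] (c : κ → ℝ) (σ : κ → Matrix ι ι ℂ)
    (τ : Matrix ι ι ℂ) :
    crossEnt (∑ i, c i • σ i) τ = ∑ i, c i * crossEnt (σ i) τ := by
  simp [crossEnt, Finset.sum_mul, Matrix.trace_sum, Complex.re_sum]

theorem matLog_sum_smul_outer {v : Fin r → ι → ℂ} (hv : OrthonormalFam v) (p : Fin r → ℝ) :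
    matLog (∑ i, p i • outer (v i)) = ∑ i, Real.log (p i) • outer (v i) := by
  have hsa (i : Fin r) : IsSelfAdjoint (outer (v i)) :=
    (Matrix.posSemidef_vecMulVec_self_star (v i)).isHermitian
  have hA : (∑ i, p i • outer (v i)).IsHermitian :=
    isSelfAdjoint_sum _ fun i _ => (IsSelfAdjoint.all (p i)).smul (hsa i)
  rw [matLog, matFun, dif_pos hA, ← hA.cfc_eq, cfc_sum_smul (outer_mul_outer hv) hsa,
    Real.log_zero, zero_smul, zero_add]

theorem vnEntropy_sum_smul_outer {v : Fin r → ι → ℂ} (hv : OrthonormalFam v) (p : Fin r → ℝ) :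
    vnEntropy (∑ i, p i • outer (v i)) = -∑ i, p i * Real.log (p i) := by
  rw [vnEntropy, crossEnt, matLog_sum_smul_outer hv, sum_smul_mul_sum_smul (outer_mul_outer hv)]
  simp [Matrix.trace_sum, trace_outer hv, Complex.re_sum]

end Outer

theorem exergy_upper_bound_general
    {n r : ℕ}
    (Φ : Matrix (Fin n) (Fin n) ℂ →ₗ[ℂ] Matrix (Fin n) (Fin n) ℂ)
    (p : Fin r → ℝ) (hp : ∀ i, 0 < p i) (hp1 : ∑ i, p i = 1)
    (v : Fin r → Fin n → ℂ) (hv : OrthonormalFam v)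
    (ρin : Matrix (Fin n) (Fin n) ℂ) (hρin : ρin = ∑ i, (p i : ℂ) • outer (v i))
    (ρout : Matrix (Fin n) (Fin n) ℂ) (hρout : ρout = Φ ρin)
    (β : ℝ) (hβ : 0 < β)
    (ΔEs : ℝ)
    (Δℰ : ℝ) (hΔℰ : Δℰ = ΔEs - β⁻¹ * (vnEntropy ρout - vnEntropy ρin)) :
    Δℰ ≤ ΔEs + β⁻¹ * Real.log (∑ i, Real.exp (-(crossEnt (Φ (outer (v i))) ρout))) := by
  simp only [Complex.coe_smul] at hρin
  have hSin : vnEntropy ρin = -∑ i, p i * Real.log (p i) :=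
    hρin ▸ vnEntropy_sum_smul_outer hv p
  have hSout : vnEntropy ρout = ∑ i, p i * crossEnt (Φ (outer (v i))) ρout := by
    have hρout' : ρout = ∑ i, p i • Φ (outer (v i)) := by
      simp only [hρout, hρin, map_sum, ← Complex.coe_smul, map_smul]
    rw [vnEntropy]
    nth_rewrite 1 [hρout']
    exact crossEnt_sum_smul_left _ _ _
  have hgibbs := sum_mul_sub_log_le_log_sum_exp hp hp1 fun i => -crossEnt (Φ (outer (v i))) ρout
  have hΔS : vnEntropy ρin - vnEntropy ρout
      ≤ Real.log (∑ i, Real.exp (-crossEnt (Φ (outer (v i))) ρout)) := by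
    convert hgibbs using 1
    simp only [hSin, hSout, mul_sub, mul_neg, Finset.sum_sub_distrib, Finset.sum_neg_distrib]
    ring
  have hΔS_scaled := mul_le_mul_of_nonneg_left hΔS (inv_nonneg.2 hβ.le)
  rw [hΔℰ]
  linarith

/-- **Section III.B** (Upper bound on exergy from the Jarzynski-like equality).
The exergy `Δℰ = ΔE_s - β⁻¹ ΔS` satisfies
`Δℰ ≤ ΔE_s + β⁻¹ ln(∑ i, e^{-C(Φ(|pᵢ⟩⟨pᵢ|), ρout)})`. -/
theorem exergy_upper_bound
    {n r : ℕ}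
    (Φ : Matrix (Fin n) (Fin n) ℂ →ₗ[ℂ] Matrix (Fin n) (Fin n) ℂ) (hΦ : IsCPTP Φ)
    (p : Fin r → ℝ) (hp : ∀ i, 0 < p i) (hp1 : ∑ i, p i = 1)
    (v : Fin r → Fin n → ℂ) (hv : OrthonormalFam v)
    (ρin : Matrix (Fin n) (Fin n) ℂ) (hρin : ρin = ∑ i, (p i : ℂ) • outer (v i))
    (ρout : Matrix (Fin n) (Fin n) ℂ) (hρout : ρout = Φ ρin)
    (H : Matrix (Fin n) (Fin n) ℂ) (hH : H.IsHermitian)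
    (β : ℝ) (hβ : 0 < β)
    (ΔEs : ℝ) (hΔEs : ΔEs = (ρout * H).trace.re - (ρin * H).trace.re)
    (Δℰ : ℝ) (hΔℰ : Δℰ = ΔEs - β⁻¹ * (vnEntropy ρout - vnEntropy ρin)) :
    Δℰ ≤ ΔEs + β⁻¹ * Real.log (∑ i, Real.exp (-(crossEnt (Φ (outer (v i))) ρout))) :=
  exergy_upper_bound_general Φ p hp hp1 v hv ρin hρin ρout hρout β hβ ΔEs Δℰ hΔℰ

end QCE
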